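/- With the setup in the context, define for x > 0: σ1(x) = Σ_{k=1}^{m−1} (|v_{n−1−2k}| + |v_{n−2−2k}|) x^{−k} and σ2(x) = |γ| + Σ_{k=1}^{m−1} (|w_{n−1−2k}| + |w_{n−2−2k}|) x^{−k}. Then for every x > 0 and every zero z of p, at least one of the following holds: |z²| ≤ x, or |z² − α| ≤ σ1(x), or |z² − β| ≤ σ2(x). -/

import Mathlib

/-
Put `t = z ^ 2` and pad `p` to the even degree `n = 2m` (multiplying by `z` if `ℓ` is odd).
Splitting `q(z) = t ^ m + E(t) + z O(t)` into even and odd parts, the `2 × 2` monic matrix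
polynomial `D(t) = t ^ m - ∑ j < m, t ^ j A_j` has `det D(t) = (t ^ m + E(t)) ^ 2 - t O(t) ^ 2
= q(z) q(-z)`, so `D(z ^ 2)` is singular at every zero `z` of `p`, and so is its conjugate by
`S`. Gershgorin's theorem applied to the columns of `S⁻¹ D(t) S`, whose leading coefficient is
upper triangular, puts `t` in one of the two discs once the lower-order terms are divided by
`|t| ^ (m - 1)` and `|t| > x` is used.
-/

open Polynomial Finset

section EvenOdd

variable {R : Type*} [CommRing R]

def evenPart (a : ℕ → R) (m : ℕ) (t : R) : R := ∑ j ∈ range m, a (2 * j) * t ^ j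

def oddPart (a : ℕ → R) (m : ℕ) (t : R) : R := ∑ j ∈ range m, a (2 * j + 1) * t ^ j

theorem sum_range_two_mul {M : Type*} [AddCommMonoid M] (f : ℕ → M) (m : ℕ) :
    ∑ i ∈ range (2 * m), f i = ∑ j ∈ range m, (f (2 * j) + f (2 * j + 1)) := by
  induction m with
  | zero => simp
  | succ k ih =>
    rw [mul_add, mul_one, sum_range_succ, sum_range_succ, sum_range_succ, ih, add_assoc]

theorem pow_add_sum_eq_evenPart_add_oddPart (a : ℕ → R) (m : ℕ) (z : R) :
    z ^ (2 * m) + ∑ i ∈ range (2 * m), a i * z ^ i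
      = (z ^ 2) ^ m + evenPart a m (z ^ 2) + z * oddPart a m (z ^ 2) := by
  rw [sum_range_two_mul, evenPart, oddPart, mul_sum, add_assoc, ← sum_add_distrib, pow_mul]
  congr 1
  refine sum_congr rfl fun j _ => ?_
  ring

theorem pow_add_sum_eq_zero_of_padding {ℓ n : ℕ} (hn : n = 2 * ((ℓ + 1) / 2)) {a b : ℕ → R}
    (haeven : Even ℓ → ∀ j, j < n → a j = b j)
    (haodd : ¬ Even ℓ → a 0 = 0 ∧ ∀ j, 1 ≤ j → j < n → a j = b (j - 1)) {z : R}
    (hz : z ^ ℓ + ∑ i ∈ range ℓ, b i * z ^ i = 0) :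
    z ^ n + ∑ i ∈ range n, a i * z ^ i = 0 := by
  by_cases hℓ : Even ℓ
  · obtain rfl : n = ℓ := by rw [Nat.even_iff] at hℓ; omega
    rw [← hz, sum_congr rfl fun i hi => by rw [haeven hℓ i (mem_range.mp hi)]]
  · obtain rfl : n = ℓ + 1 := by rw [Nat.even_iff] at hℓ; omega
    obtain ⟨ha0, ha⟩ := haodd hℓ
    have hshift : ∑ i ∈ range ℓ, a (i + 1) * z ^ (i + 1) = z * ∑ i ∈ range ℓ, b i * z ^ i := by
      rw [mul_sum]
      refine sum_congr rfl fun i hi => ?_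
      rw [ha (i + 1) (by omega) (by simpa using hi), Nat.add_sub_cancel]
      ring
    rw [sum_range_succ', hshift, ha0, zero_mul, add_zero, pow_succ', ← mul_add, hz, mul_zero]

/-- With `c = a (2 * m - 1)`, `E = evenPart a m t` and `O = oddPart a m t`, the matrix on the left
factors as `!![t ^ m + E, t * O; O, t ^ m + E] * !![1, -c; 0, 1]`. -/
theorem det_pow_smul_one_sub_sum_eq (a : ℕ → R) {m : ℕ} (hm : 0 < m)
    (A : ℕ → Matrix (Fin 2) (Fin 2) R)
    (hA0 : A 0 = !![-(a 0), a (2 * m - 1) * a 0; -(a 1), a (2 * m - 1) * a 1 - a 0])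
    (hA : ∀ j, 1 ≤ j → j ≤ m - 1 →
      A j = !![-(a (2 * j)), a (2 * m - 1) * a (2 * j) - a (2 * j - 1);
               -(a (2 * j + 1)), a (2 * m - 1) * a (2 * j + 1) - a (2 * j)]) (t : R) :
    (t ^ m • 1 - ∑ j ∈ range m, t ^ j • A j).det
      = (t ^ m + evenPart a m t) ^ 2 - t * oddPart a m t ^ 2 := by
  obtain ⟨N, rfl⟩ : ∃ N, m = N + 1 := ⟨m - 1, by omega⟩
  set c := a (2 * (N + 1) - 1)
  have hc : c = a (2 * N + 1) := rfl
  have hAj : ∀ j < N + 1, A j 0 0 = -a (2 * j) ∧ A j 1 0 = -a (2 * j + 1) ∧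
      A j 1 1 = c * a (2 * j + 1) - a (2 * j) := by
    rintro (_ | j) hj
    · simp [hA0]
    · simp [hA (j + 1) (by omega) (by omega)]
  have hA01 : ∀ j < N, A (j + 1) 0 1 = c * a (2 * (j + 1)) - a (2 * j + 1) := by
    intro j hj
    simp [hA (j + 1) (by omega) (by omega), show 2 * (j + 1) - 1 = 2 * j + 1 by omega]
  have hsum_apply : ∀ i k,
      (∑ j ∈ range (N + 1), t ^ j • A j) i k = ∑ j ∈ range (N + 1), t ^ j * A j i k :=
    fun i k => by simp [Matrix.sum_apply]
  have s00 : ∑ j ∈ range (N + 1), t ^ j * A j 0 0 = -evenPart a (N + 1) t := by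
    rw [evenPart, ← sum_neg_distrib]
    exact sum_congr rfl fun j hj => by rw [(hAj j (mem_range.mp hj)).1]; ring
  have s10 : ∑ j ∈ range (N + 1), t ^ j * A j 1 0 = -oddPart a (N + 1) t := by
    rw [oddPart, ← sum_neg_distrib]
    exact sum_congr rfl fun j hj => by rw [(hAj j (mem_range.mp hj)).2.1]; ring
  have s11 : ∑ j ∈ range (N + 1), t ^ j * A j 1 1
      = c * oddPart a (N + 1) t - evenPart a (N + 1) t := by
    rw [oddPart, evenPart, mul_sum, ← sum_sub_distrib]
    exact sum_congr rfl fun j hj => by rw [(hAj j (mem_range.mp hj)).2.2]; ring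
  have s01 : ∑ j ∈ range (N + 1), t ^ j * A j 0 1
      = c * (evenPart a (N + 1) t + t ^ (N + 1)) - t * oddPart a (N + 1) t := by
    have hshift : ∀ j ∈ range N, t ^ (j + 1) * A (j + 1) 0 1
        = c * (a (2 * (j + 1)) * t ^ (j + 1)) - t * (a (2 * j + 1) * t ^ j) := fun j hj => by
      rw [hA01 j (mem_range.mp hj)]; ring
    rw [sum_range_succ', sum_congr rfl hshift, sum_sub_distrib, ← mul_sum, ← mul_sum, evenPart,
      oddPart, sum_range_succ' _ N, sum_range_succ _ N, hA0, ← hc]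
    simp only [pow_zero, Fin.isValue, Matrix.of_apply, Matrix.cons_val', Matrix.cons_val_one,
      Matrix.cons_val_fin_one, Matrix.cons_val_zero, one_mul, mul_zero, mul_one]
    ring
  rw [Matrix.det_fin_two]
  simp only [Matrix.sub_apply, Matrix.smul_apply, hsum_apply, s00, s01, s10, s11, smul_eq_mul,
    Matrix.one_apply_eq, Matrix.one_apply_ne zero_ne_one, Matrix.one_apply_ne one_ne_zero]
  ring

end EvenOdd

theorem sum_Icc_reflect {M : Type*} [AddCommMonoid M] (f : ℕ → M) (N : ℕ) :
    ∑ k ∈ Icc 1 N, f (N - k) = ∑ j ∈ range N, f j := by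
  rw [← Ico_add_one_right_eq_Icc, sum_Ico_reflect f 1 le_rfl, range_eq_Ico]
  simp

theorem sum_mul_pow_le_pow_mul_sum_div_pow {c : ℕ → ℝ} (hc : ∀ j, 0 ≤ c j) {x T : ℝ}
    (hx : 0 < x) (hxT : x ≤ T) (N : ℕ) :
    ∑ j ∈ range N, c j * T ^ j ≤ T ^ N * ∑ k ∈ Icc 1 N, c (N - k) / x ^ k := by
  rw [← sum_Icc_reflect, mul_sum]
  refine sum_le_sum fun k hk => ?_
  have hxk : T ^ (N - k) * x ^ k ≤ T ^ N := by
    rw [← pow_sub_mul_pow T (mem_Icc.mp hk).2]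
    gcongr
    exact pow_nonneg (hx.le.trans hxT) _
  rw [mul_div_assoc', le_div_iff₀ (pow_pos hx k), mul_comm (c _), mul_assoc, mul_comm (c _),
    ← mul_assoc]
  exact mul_le_mul_of_nonneg_right hxk (hc _)

namespace Matrix

variable {ι K : Type*} [DecidableEq ι]

theorem exists_norm_diag_le_sum_col_of_det_eq_zero [Fintype ι] [NormedField K]
    {M : Matrix ι ι K} (h : M.det = 0) : ∃ k, ‖M k k‖ ≤ ∑ i ∈ univ.erase k, ‖M i k‖ := by
  by_contra! hlt
  exact det_ne_zero_of_sum_col_lt_diag hlt h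

theorem pow_smul_one_sub_sum_apply [CommRing K] (C : ℕ → Matrix ι ι K) (N : ℕ) (μ : K)
    (i k : ι) :
    (μ ^ (N + 1) • 1 - ∑ j ∈ range (N + 1), μ ^ j • C j) i k
      = μ ^ N * ((1 : Matrix ι ι K) i k * μ - C N i k) - ∑ j ∈ range N, μ ^ j * C j i k := by
  rw [sum_range_succ]
  simp only [sub_apply, add_apply, smul_apply, sum_apply, smul_eq_mul]
  ring

theorem exists_norm_sub_diag_le_of_det_eq_zero [Fintype ι] [NormedField K]
    (C : ℕ → Matrix ι ι K) (N : ℕ) {μ : K} {x : ℝ} (hx : 0 < x) (hxμ : x < ‖μ‖)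
    (hdet : (μ ^ (N + 1) • 1 - ∑ j ∈ range (N + 1), μ ^ j • C j).det = 0) :
    ∃ k, ‖μ - C N k k‖ ≤ ∑ i ∈ univ.erase k, ‖C N i k‖
      + ∑ l ∈ Icc 1 N, (∑ i, ‖C (N - l) i k‖) / x ^ l := by
  obtain ⟨k, hk⟩ := exists_norm_diag_le_sum_col_of_det_eq_zero hdet
  refine ⟨k, ?_⟩
  set R : ι → K := fun i => ∑ j ∈ range N, μ ^ j * C j i k
  have hR : ∑ i, ‖R i‖ ≤ ∑ j ∈ range N, (∑ i, ‖C j i k‖) * ‖μ‖ ^ j := by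
    simp_rw [sum_mul, R]
    rw [sum_comm]
    gcongr with i _ j _
    exact (norm_sum_le _ _).trans (by simp [norm_mul, mul_comm])
  have hoff : ∀ i ∈ univ.erase k, ‖(μ ^ (N + 1) • 1 - ∑ j ∈ range (N + 1), μ ^ j • C j) i k‖
      ≤ ‖μ‖ ^ N * ‖C N i k‖ + ‖R i‖ := by
    intro i hi
    rw [pow_smul_one_sub_sum_apply, one_apply_ne (ne_of_mem_erase hi), zero_mul, zero_sub,
      mul_neg]
    refine (norm_sub_le _ _).trans ?_
    simp [R, norm_mul, norm_pow]
  have hscaled : ‖μ‖ ^ N * ‖μ - C N k k‖ ≤ ‖μ‖ ^ N * (∑ i ∈ univ.erase k, ‖C N i k‖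
      + ∑ l ∈ Icc 1 N, (∑ i, ‖C (N - l) i k‖) / x ^ l) := by
    calc ‖μ‖ ^ N * ‖μ - C N k k‖
        ≤ ‖(μ ^ (N + 1) • 1 - ∑ j ∈ range (N + 1), μ ^ j • C j) k k‖ + ‖R k‖ := by
          rw [pow_smul_one_sub_sum_apply, one_apply_eq, one_mul, ← norm_pow, ← norm_mul]
          exact norm_le_norm_sub_add _ _
      _ ≤ ∑ i ∈ univ.erase k, (‖μ‖ ^ N * ‖C N i k‖ + ‖R i‖) + ‖R k‖ :=
          add_le_add_left (hk.trans (sum_le_sum hoff)) _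
      _ = ‖μ‖ ^ N * ∑ i ∈ univ.erase k, ‖C N i k‖ + ∑ i, ‖R i‖ := by
          rw [sum_add_distrib, ← mul_sum, add_assoc, sum_erase_add _ _ (mem_univ k)]
      _ ≤ _ := by
          rw [mul_add]
          gcongr
          exact hR.trans
            (sum_mul_pow_le_pow_mul_sum_div_pow (fun j => by positivity) hx hxμ.le N)
  exact le_of_mul_le_mul_left hscaled (pow_pos (hx.trans hxμ) N)

theorem det_smul_one_sub_sum_conj [Fintype ι] [CommRing K] {S : Matrix ι ι K} (hS : IsUnit S)
    (c : K) (f : ℕ → K) (A : ℕ → Matrix ι ι K)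
    (s : Finset ℕ) :
    (c • 1 - ∑ j ∈ s, f j • (S⁻¹ * A j * S)).det = (c • 1 - ∑ j ∈ s, f j • A j).det := by
  rw [← det_conj' hS (c • 1 - ∑ j ∈ s, f j • A j)]
  congr 1
  simp [Matrix.mul_sub, Matrix.sub_mul, mul_sum, sum_mul,
    nonsing_inv_mul S ((isUnit_iff_isUnit_det S).mp hS)]

theorem norm_sub_le_or_norm_sub_le_of_det_eq_zero [NormedField K]
    (C : ℕ → Matrix (Fin 2) (Fin 2) K) (N : ℕ) {α β γ : K} {v w : ℕ → K}
    (hlead : C N = !![α, γ; 0, β])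
    (hC : ∀ j < N, C j = !![v (2 * j), w (2 * j); v (2 * j + 1), w (2 * j + 1)])
    {μ : K} {x : ℝ} (hx : 0 < x) (hxμ : x < ‖μ‖)
    (hdet : (μ ^ (N + 1) • 1 - ∑ j ∈ range (N + 1), μ ^ j • C j).det = 0) :
    ‖μ - α‖ ≤ ∑ l ∈ Icc 1 N, (‖v (2 * N + 1 - 2 * l)‖ + ‖v (2 * N - 2 * l)‖) / x ^ l ∨
      ‖μ - β‖ ≤ ‖γ‖ + ∑ l ∈ Icc 1 N, (‖w (2 * N + 1 - 2 * l)‖ + ‖w (2 * N - 2 * l)‖) / x ^ l := by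
  obtain ⟨k, hk⟩ := exists_norm_sub_diag_le_of_det_eq_zero C N hx hxμ hdet
  have hcoef : ∀ l ∈ Icc 1 N, C (N - l) =
      !![v (2 * N - 2 * l), w (2 * N - 2 * l); v (2 * N + 1 - 2 * l), w (2 * N + 1 - 2 * l)] := by
    intro l hl
    have hl := mem_Icc.mp hl
    rw [hC _ (by omega), show 2 * (N - l) = 2 * N - 2 * l by omega,
      show 2 * N - 2 * l + 1 = 2 * N + 1 - 2 * l by omega]
  fin_cases k <;>
    simp only [Fin.zero_eta, Fin.mk_one, Fin.isValue, hlead, of_apply, cons_val', cons_val_zero,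
      cons_val_one, cons_val_fin_one, mem_univ, sum_erase_eq_sub, Fin.sum_univ_two, norm_zero,
      add_zero, sub_self, zero_add, add_sub_cancel_right] at hk
  · refine Or.inl (hk.trans_eq (sum_congr rfl fun l hl => ?_))
    simp [hcoef l hl, add_comm]
  · refine Or.inr (hk.trans_eq (congrArg _ (sum_congr rfl fun l hl => ?_)))
    simp [hcoef l hl, add_comm]

end Matrix

theorem gershgorin_union_sigma
    (ℓ : ℕ) (hℓ : 3 ≤ ℓ) (b : ℕ → ℂ) (p : Polynomial ℂ)
    (hp : p = X ^ ℓ + ∑ i ∈ Finset.range ℓ, C (b i) * X ^ i)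
    (m n : ℕ) (hm : m = (ℓ + 1) / 2) (hn : n = 2 * m)
    (a : ℕ → ℂ)
    (haeven : Even ℓ → ∀ j, j < n → a j = b j)
    (haodd : ¬ Even ℓ → a 0 = 0 ∧ ∀ j, 1 ≤ j → j < n → a j = b (j - 1))
    (A : ℕ → Matrix (Fin 2) (Fin 2) ℂ)
    (hA0 : A 0 = !![-(a 0), a (n - 1) * a 0; -(a 1), a (n - 1) * a 1 - a 0])
    (hA : ∀ j, 1 ≤ j → j ≤ m - 1 →
      A j = !![-(a (2 * j)), a (n - 1) * a (2 * j) - a (2 * j - 1);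
               -(a (2 * j + 1)), a (n - 1) * a (2 * j + 1) - a (2 * j)])
    (S : Matrix (Fin 2) (Fin 2) ℂ) (hS : IsUnit S)
    (α β γ : ℂ)
    (htri : S⁻¹ * A (m - 1) * S = !![α, γ; 0, β])
    (v w : ℕ → ℂ)
    (hvw : ∀ j, j ≤ m - 2 →
      S⁻¹ * A j * S = !![v (2 * j), w (2 * j); v (2 * j + 1), w (2 * j + 1)])
    (σ1 σ2 : ℝ → ℝ)
    (hσ1 : ∀ x : ℝ, 0 < x → σ1 x = ∑ k ∈ Finset.Icc 1 (m - 1),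
        (‖v (n - 1 - 2 * k)‖ + ‖v (n - 2 - 2 * k)‖) / x ^ k)
    (hσ2 : ∀ x : ℝ, 0 < x → σ2 x = ‖γ‖ + ∑ k ∈ Finset.Icc 1 (m - 1),
        (‖w (n - 1 - 2 * k)‖ + ‖w (n - 2 - 2 * k)‖) / x ^ k)
    : ∀ x : ℝ, 0 < x → ∀ z : ℂ, p.eval z = 0 →
      ‖z ^ 2‖ ≤ x ∨ ‖z ^ 2 - α‖ ≤ σ1 x ∨
        ‖z ^ 2 - β‖ ≤ σ2 x := by
  intro x hx z hz
  rcases le_or_gt ‖z ^ 2‖ x with hzx | hxz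
  · exact Or.inl hzx
  right
  subst hn
  have hq := pow_add_sum_eq_zero_of_padding (by rw [hm]) haeven haodd
    (by simpa [hp, eval_finsetSum] using hz)
  rw [pow_add_sum_eq_evenPart_add_oddPart] at hq
  have hdet : ((z ^ 2) ^ m • 1 - ∑ j ∈ range m, (z ^ 2) ^ j • (S⁻¹ * A j * S)).det = 0 := by
    rw [Matrix.det_smul_one_sub_sum_conj hS, det_pow_smul_one_sub_sum_eq a (by omega) A hA0 hA]
    linear_combination ((z ^ 2) ^ m + evenPart a m (z ^ 2) - z * oddPart a m (z ^ 2)) * hq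
  obtain ⟨N, rfl⟩ : ∃ N, m = N + 1 := ⟨m - 1, by omega⟩
  have h1 : 2 * (N + 1) - 1 = 2 * N + 1 := by omega
  have h2 : 2 * (N + 1) - 2 = 2 * N := by omega
  rw [hσ1 x hx, hσ2 x hx]
  simp only [h1, h2, Nat.add_sub_cancel]
  exact Matrix.norm_sub_le_or_norm_sub_le_of_det_eq_zero _ N (by simpa using htri)
    (fun j hj => hvw j (by omega)) hx hxz hdet
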